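/- R-reduction commutes locally with parallel η/SP-expansion: if M ⇒_E N and M →_R M', then there is a term P such that N →_R* P and M' ⇒_E P. -/

import Mathlib

/-!
Only a root redex can be disturbed by an expansion, namely when its head, an abstraction or a
pair, has been η- or SP-expanded, possibly many times over. By induction on that expansion of
the head, the expanded head still behaves like the original one under every elimination
(application, `π₁`, `π₂`, and application to the fresh variable that an η-expansion introduces):
a few R-steps on the expanded side meet an expansion of the contracted redex. All other steps
are closed by congruence from the induction hypothesis on the expansion.
-/

/-- Untyped lambda terms with pairing and projections, de Bruijn representation
(so terms are automatically identified up to alpha-equivalence). -/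
inductive Tm : Type
  | var : Nat → Tm
  | app : Tm → Tm → Tm
  | lam : Tm → Tm
  | pair : Tm → Tm → Tm
  | p1 : Tm → Tm
  | p2 : Tm → Tm

/-- Shift free de Bruijn indices ≥ d up by one. -/
def Tm.lift (d : Nat) : Tm → Tm
  | .var n => if n < d then .var n else .var (n + 1)
  | .app a b => .app (a.lift d) (b.lift d)
  | .lam a => .lam (a.lift (d + 1))
  | .pair a b => .pair (a.lift d) (b.lift d)
  | .p1 a => .p1 (a.lift d)
  | .p2 a => .p2 (a.lift d)

/-- Capture-avoiding substitution of s for variable k. -/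
def Tm.subst : Tm → Nat → Tm → Tm
  | .var n, k, s => if n = k then s else if n < k then .var n else .var (n - 1)
  | .app a b, k, s => .app (a.subst k s) (b.subst k s)
  | .lam a, k, s => .lam (a.subst (k + 1) (s.lift 0))
  | .pair a b, k, s => .pair (a.subst k s) (b.subst k s)
  | .p1 a, k, s => .p1 (a.subst k s)
  | .p2 a, k, s => .p2 (a.subst k s)

/-- One-step R-reduction: compatible closure of (β), (π₁), (π₂), (δπ), (π₁λ), (π₂λ). -/
inductive StepR : Tm → Tm → Prop
  | beta {M N} : StepR (.app (.lam M) N) (M.subst 0 N)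
  | pi1 {M N} : StepR (.p1 (.pair M N)) M
  | pi2 {M N} : StepR (.p2 (.pair M N)) N
  | dpi {M N P} : StepR (.app (.pair M N) P) (.pair (.app M P) (.app N P))
  | pi1lam {M} : StepR (.p1 (.lam M)) (.lam (.p1 M))
  | pi2lam {M} : StepR (.p2 (.lam M)) (.lam (.p2 M))
  | lam {M M'} : StepR M M' → StepR (.lam M) (.lam M')
  | appL {M M' N} : StepR M M' → StepR (.app M N) (.app M' N)
  | appR {M N N'} : StepR N N' → StepR (.app M N) (.app M N')
  | pairL {M M' N} : StepR M M' → StepR (.pair M N) (.pair M' N)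
  | pairR {M N N'} : StepR N N' → StepR (.pair M N) (.pair M N')
  | p1 {M M'} : StepR M M' → StepR (.p1 M) (.p1 M')
  | p2 {M M'} : StepR M M' → StepR (.p2 M) (.p2 M')

/-- Parallel η/SP-expansion. -/
inductive ParE : Tm → Tm → Prop
  | refl {M} : ParE M M
  | lam {M M'} : ParE M M' → ParE (.lam M) (.lam M')
  | app {M M' N N'} : ParE M M' → ParE N N' → ParE (.app M N) (.app M' N')
  | pair {M M' N N'} : ParE M M' → ParE N N' → ParE (.pair M N) (.pair M' N')
  | p1 {M M'} : ParE M M' → ParE (.p1 M) (.p1 M')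
  | p2 {M M'} : ParE M M' → ParE (.p2 M) (.p2 M')
  | eta {M M'} : ParE M M' → ParE M (.lam (.app (M'.lift 0) (.var 0)))
  | sp {M M'} : ParE M M' → ParE M (.pair (.p1 M') (.p2 M'))

open Relation

local infix:50 " ⟶* " => ReflTransGen StepR

namespace Tm

theorem lift_lift (M : Tm) {i j : Nat} (h : i ≤ j) :
    (M.lift j).lift i = (M.lift i).lift (j + 1) := by
  induction M generalizing i j with
  | var n => grind [lift]
  | lam a ih => simp only [lift, ih (Nat.succ_le_succ h)]
  | _ => simp_all [lift]

theorem subst_lift (M : Tm) (k : Nat) (s : Tm) : (M.lift k).subst k s = M := by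
  induction M generalizing k s with
  | var n => grind [lift, subst]
  | _ => simp_all [lift, subst]

theorem subst_lift_succ_var (M : Tm) (k : Nat) : (M.lift (k + 1)).subst k (.var k) = M := by
  induction M generalizing k with
  | var n => grind [lift, subst]
  | _ => simp_all [lift, subst]

theorem lift_subst (M : Tm) {k d : Nat} (s : Tm) (h : k ≤ d) :
    (M.subst k s).lift d = (M.lift (d + 1)).subst k (s.lift d) := by
  induction M generalizing k d s with
  | var n => grind [lift, subst]
  | lam a ih => simp only [lift, subst, ih _ (Nat.succ_le_succ h), lift_lift s (Nat.zero_le d)]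
  | _ => simp_all [lift, subst]

theorem subst_succ_lift (M : Tm) {k d : Nat} (s : Tm) (h : d ≤ k) :
    (M.lift d).subst (k + 1) (s.lift d) = (M.subst k s).lift d := by
  induction M generalizing k d s with
  | var n => grind [lift, subst]
  | lam a ih => simp only [lift, subst, lift_lift s (Nat.zero_le d), ih _ (Nat.succ_le_succ h)]
  | _ => simp_all [lift, subst]

theorem lift_eta (A : Tm) (d : Nat) :
    (Tm.lam (.app (A.lift 0) (.var 0))).lift d = .lam (.app ((A.lift d).lift 0) (.var 0)) := by
  simp [lift, A.lift_lift (Nat.zero_le d)]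

theorem subst_eta_body (A B : Tm) : (Tm.app (A.lift 0) (.var 0)).subst 0 B = A.app B := by
  simp [subst, subst_lift]

end Tm

namespace StepR

theorem lift {M N : Tm} (h : StepR M N) (d : Nat) : StepR (M.lift d) (N.lift d) := by
  induction h generalizing d with
  | @beta M N => rw [Tm.lift_subst M N (Nat.zero_le d)]; exact beta
  | lam _ ih => exact lam (ih (d + 1))
  | appL _ ih => exact appL (ih d)
  | appR _ ih => exact appR (ih d)
  | pairL _ ih => exact pairL (ih d)
  | pairR _ ih => exact pairR (ih d)
  | p1 _ ih => exact p1 (ih d)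
  | p2 _ ih => exact p2 (ih d)
  | _ => constructor

theorem beta_of_eq {M N P : Tm} (h : M.subst 0 N = P) : StepR (.app (.lam M) N) P :=
  h ▸ beta

theorem beta_lift_var (M : Tm) : StepR (.app ((Tm.lam M).lift 0) (.var 0)) M :=
  beta_of_eq (M.subst_lift_succ_var 0)

theorem eta_beta (A B : Tm) : StepR (.app (.lam (.app (A.lift 0) (.var 0))) B) (A.app B) :=
  beta_of_eq (A.subst_eta_body B)

theorem star_lam {M N : Tm} (h : M ⟶* N) : M.lam ⟶* N.lam :=
  ReflTransGen.lift Tm.lam (fun _ _ => lam) _ _ h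

theorem star_p1 {M N : Tm} (h : M ⟶* N) : M.p1 ⟶* N.p1 :=
  ReflTransGen.lift Tm.p1 (fun _ _ => p1) _ _ h

theorem star_p2 {M N : Tm} (h : M ⟶* N) : M.p2 ⟶* N.p2 :=
  ReflTransGen.lift Tm.p2 (fun _ _ => p2) _ _ h

theorem star_appL {M N : Tm} (h : M ⟶* N) (P : Tm) : M.app P ⟶* N.app P :=
  ReflTransGen.lift (·.app P) (fun _ _ => appL) _ _ h

theorem star_appR {M N : Tm} (P : Tm) (h : M ⟶* N) : P.app M ⟶* P.app N :=
  ReflTransGen.lift P.app (fun _ _ => appR) _ _ h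

theorem star_pair {M M' N N' : Tm} (hM : M ⟶* M') (hN : N ⟶* N') : M.pair N ⟶* M'.pair N' :=
  (ReflTransGen.lift (·.pair N) (fun _ _ => pairL) _ _ hM).trans
    (ReflTransGen.lift M'.pair (fun _ _ => pairR) _ _ hN)

theorem star_lift {M N : Tm} (h : M ⟶* N) (d : Nat) : M.lift d ⟶* N.lift d :=
  ReflTransGen.lift (Tm.lift d) (fun _ _ hs => hs.lift d) _ _ h

end StepR

namespace ParE

theorem lift {M N : Tm} (h : ParE M N) (d : Nat) : ParE (M.lift d) (N.lift d) := by
  induction h generalizing d with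
  | refl => exact refl
  | lam _ ih => exact lam (ih (d + 1))
  | app _ _ ih₁ ih₂ => exact app (ih₁ d) (ih₂ d)
  | pair _ _ ih₁ ih₂ => exact pair (ih₁ d) (ih₂ d)
  | p1 _ ih => exact p1 (ih d)
  | p2 _ ih => exact p2 (ih d)
  | eta _ ih => rw [Tm.lift_eta]; exact eta (ih d)
  | sp _ ih => exact sp (ih d)

theorem subst_right (M : Tm) {s s' : Tm} (h : ParE s s') (k : Nat) :
    ParE (M.subst k s) (M.subst k s') := by
  induction M generalizing s s' k with
  | var n => simp only [Tm.subst]; split_ifs <;> first | exact h | exact refl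
  | app _ _ ih₁ ih₂ => exact app (ih₁ h k) (ih₂ h k)
  | lam _ ih => exact lam (ih (h.lift 0) (k + 1))
  | pair _ _ ih₁ ih₂ => exact pair (ih₁ h k) (ih₂ h k)
  | p1 _ ih => exact p1 (ih h k)
  | p2 _ ih => exact p2 (ih h k)

theorem subst {M M' s s' : Tm} (h : ParE M M') (hs : ParE s s') (k : Nat) :
    ParE (M.subst k s) (M'.subst k s') := by
  induction h generalizing s s' k with
  | @refl M => exact subst_right M hs k
  | lam _ ih => exact lam (ih (hs.lift 0) (k + 1))
  | app _ _ ih₁ ih₂ => exact app (ih₁ hs k) (ih₂ hs k)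
  | pair _ _ ih₁ ih₂ => exact pair (ih₁ hs k) (ih₂ hs k)
  | p1 _ ih => exact p1 (ih hs k)
  | p2 _ ih => exact p2 (ih hs k)
  | @eta M M' _ ih =>
    have h_body : (Tm.app (M'.lift 0) (.var 0)).subst (k + 1) (s'.lift 0) =
        .app ((M'.subst k s').lift 0) (.var 0) := by
      simp [Tm.subst, M'.subst_succ_lift s' (Nat.zero_le k)]
    rw [Tm.subst, h_body]
    exact eta (ih hs k)
  | sp _ ih => exact sp (ih hs k)

open StepR

/- The projection clauses are the induction hypothesis that an SP-expanded abstraction needs: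
there the argument meets `π₁ A` and `π₂ A` instead of `A`. -/

theorem lam_app_commute {M A B B' : Tm} (h : ParE (.lam M) A) (hB : ParE B B') :
    (∃ Z, A.app B' ⟶* Z ∧ ParE (M.subst 0 B) Z) ∧
    ∃ W, A.p1.app B' ⟶* W.p1 ∧ A.p2.app B' ⟶* W.p2 ∧ ParE (M.subst 0 B) W := by
  generalize hX : Tm.lam M = X at h
  induction h with
  | refl =>
    subst hX
    exact ⟨⟨_, .single beta, refl.subst hB 0⟩, _, .head (appL pi1lam) (.single beta),
      .head (appL pi2lam) (.single beta), refl.subst hB 0⟩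
  | lam hM =>
    cases hX
    exact ⟨⟨_, .single beta, hM.subst hB 0⟩, _, .head (appL pi1lam) (.single beta),
      .head (appL pi2lam) (.single beta), hM.subst hB 0⟩
  | app | pair | p1 | p2 => cases hX
  | @eta _ A _ ih =>
    obtain ⟨⟨Z, hAZ, hMZ⟩, -⟩ := ih hX
    have beta_proj₁ : StepR (.app (.lam (.p1 (.app (A.lift 0) (.var 0)))) B') (A.app B').p1 :=
      beta_of_eq (congrArg Tm.p1 (A.subst_eta_body B'))
    have beta_proj₂ : StepR (.app (.lam (.p2 (.app (A.lift 0) (.var 0)))) B') (A.app B').p2 :=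
      beta_of_eq (congrArg Tm.p2 (A.subst_eta_body B'))
    exact ⟨⟨Z, .head (eta_beta A B') hAZ, hMZ⟩, Z,
      .head (appL pi1lam) (.head beta_proj₁ (star_p1 hAZ)),
      .head (appL pi2lam) (.head beta_proj₂ (star_p2 hAZ)), hMZ⟩
  | sp _ ih =>
    obtain ⟨-, W, h₁, h₂, hMW⟩ := ih hX
    exact ⟨⟨W.p1.pair W.p2, .head dpi (star_pair h₁ h₂), sp hMW⟩, W,
      .head (appL pi1) h₁, .head (appL pi2) h₂, hMW⟩

/- The last clause handles an η-expanded pair, whose projections only reduce under the new `λ`. -/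
theorem pair_proj_commute {M₁ M₂ A : Tm} (h : ParE (.pair M₁ M₂) A) :
    (∃ Z, A.p1 ⟶* Z ∧ ParE M₁ Z) ∧ (∃ Z, A.p2 ⟶* Z ∧ ParE M₂ Z) ∧
    ∃ V₁ V₂ : Tm, (A.lift 0).app (.var 0) ⟶* V₁.pair V₂ ∧ ParE M₁ V₁.lam ∧ ParE M₂ V₂.lam := by
  generalize hX : Tm.pair M₁ M₂ = X at h
  induction h with
  | refl =>
    subst hX
    exact ⟨⟨_, .single pi1, refl⟩, ⟨_, .single pi2, refl⟩, _, _, .single dpi, eta refl, eta refl⟩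
  | pair h₁ h₂ =>
    cases hX
    exact ⟨⟨_, .single pi1, h₁⟩, ⟨_, .single pi2, h₂⟩, _, _, .single dpi, eta h₁, eta h₂⟩
  | lam | app | p1 | p2 => cases hX
  | eta _ ih =>
    obtain ⟨-, -, V₁, V₂, hV, hM₁, hM₂⟩ := ih hX
    exact ⟨⟨V₁.lam, .head pi1lam ((star_lam (star_p1 hV)).tail (StepR.lam pi1)), hM₁⟩,
      ⟨V₂.lam, .head pi2lam ((star_lam (star_p2 hV)).tail (StepR.lam pi2)), hM₂⟩,
      V₁, V₂, .head (beta_lift_var _) hV, hM₁, hM₂⟩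
  | sp _ ih =>
    obtain ⟨⟨Z₁, h₁, hM₁⟩, ⟨Z₂, h₂, hM₂⟩, -⟩ := ih hX
    exact ⟨⟨Z₁, .head pi1 h₁, hM₁⟩, ⟨Z₂, .head pi2 h₂, hM₂⟩, _, _,
      .head dpi (star_pair (star_appL (star_lift h₁ 0) _) (star_appL (star_lift h₂ 0) _)),
      eta hM₁, eta hM₂⟩

theorem pair_app_commute {M₁ M₂ A P P' : Tm} (h : ParE (.pair M₁ M₂) A) (hP : ParE P P') :
    ∃ Z, A.app P' ⟶* Z ∧ ParE ((M₁.app P).pair (M₂.app P)) Z := by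
  generalize hX : Tm.pair M₁ M₂ = X at h
  induction h with
  | refl => subst hX; exact ⟨_, .single dpi, pair (app refl hP) (app refl hP)⟩
  | pair h₁ h₂ => cases hX; exact ⟨_, .single dpi, pair (app h₁ hP) (app h₂ hP)⟩
  | lam | app | p1 | p2 => cases hX
  | @eta _ A _ ih =>
    obtain ⟨Z, hZ, hMZ⟩ := ih hX
    exact ⟨Z, .head (eta_beta A P') hZ, hMZ⟩
  | sp h _ =>
    subst hX
    obtain ⟨⟨Z₁, h₁, hM₁⟩, ⟨Z₂, h₂, hM₂⟩, -⟩ := pair_proj_commute h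
    exact ⟨_, .head dpi (star_pair (star_appL h₁ P') (star_appL h₂ P')),
      pair (app hM₁ hP) (app hM₂ hP)⟩

theorem lam_eta_commute {M A : Tm} (h : ParE (.lam M) A) :
    ∃ V, (A.lift 0).app (.var 0) ⟶* V ∧ ParE M V := by
  generalize hX : Tm.lam M = X at h
  induction h with
  | refl => subst hX; exact ⟨M, .single (beta_lift_var M), refl⟩
  | lam hM => cases hX; exact ⟨_, .single (beta_lift_var _), hM⟩
  | app | pair | p1 | p2 => cases hX
  | eta _ ih =>
    obtain ⟨V, hV, hMV⟩ := ih hX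
    exact ⟨V, .head (beta_lift_var _) hV, hMV⟩
  | sp h _ =>
    subst hX
    obtain ⟨-, W, h₁, h₂, hMW⟩ := lam_app_commute (h.lift 0) (refl (M := .var 0))
    rw [M.subst_lift_succ_var 0] at hMW
    exact ⟨_, .head dpi (star_pair h₁ h₂), sp hMW⟩

theorem lam_proj_commute {M A : Tm} (h : ParE (.lam M) A) :
    (∃ Z, A.p1 ⟶* Z ∧ ParE M.p1.lam Z) ∧ (∃ Z, A.p2 ⟶* Z ∧ ParE M.p2.lam Z) := by
  generalize hX : Tm.lam M = X at h
  induction h with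
  | refl => subst hX; exact ⟨⟨_, .single pi1lam, refl⟩, ⟨_, .single pi2lam, refl⟩⟩
  | lam hM => cases hX; exact ⟨⟨_, .single pi1lam, lam (p1 hM)⟩, ⟨_, .single pi2lam, lam (p2 hM)⟩⟩
  | app | pair | p1 | p2 => cases hX
  | eta h _ =>
    subst hX
    obtain ⟨V, hV, hMV⟩ := lam_eta_commute h
    exact ⟨⟨_, .head pi1lam (star_lam (star_p1 hV)), lam (p1 hMV)⟩,
      ⟨_, .head pi2lam (star_lam (star_p2 hV)), lam (p2 hMV)⟩⟩
  | sp _ ih =>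
    obtain ⟨⟨Z₁, h₁, hM₁⟩, ⟨Z₂, h₂, hM₂⟩⟩ := ih hX
    exact ⟨⟨Z₁, .head pi1 h₁, hM₁⟩, ⟨Z₂, .head pi2 h₂, hM₂⟩⟩

end ParE

def CommutesAt (M N : Tm) : Prop :=
  ∀ M', StepR M M' → ∃ P, N ⟶* P ∧ ParE M' P

namespace CommutesAt

open StepR

theorem refl (M : Tm) : CommutesAt M M :=
  fun M' hR => ⟨M', .single hR, .refl⟩

theorem lam {M N : Tm} (h : CommutesAt M N) : CommutesAt M.lam N.lam := by
  intro _ hR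
  cases hR with
  | @lam _ M' hR =>
    obtain ⟨P, hNP, hMP⟩ := h M' hR
    exact ⟨P.lam, star_lam hNP, .lam hMP⟩

theorem app {A A' B B' : Tm} (hA : ParE A A') (hB : ParE B B')
    (ihA : CommutesAt A A') (ihB : CommutesAt B B') : CommutesAt (A.app B) (A'.app B') := by
  intro _ hR
  cases hR with
  | beta => exact (hA.lam_app_commute hB).1
  | dpi => exact hA.pair_app_commute hB
  | @appL _ A₁ _ hR =>
    obtain ⟨P, hA'P, hA₁P⟩ := ihA A₁ hR
    exact ⟨P.app B', star_appL hA'P B', .app hA₁P hB⟩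
  | @appR _ _ B₁ hR =>
    obtain ⟨P, hB'P, hB₁P⟩ := ihB B₁ hR
    exact ⟨A'.app P, star_appR A' hB'P, .app hA hB₁P⟩

theorem pair {A A' B B' : Tm} (hA : ParE A A') (hB : ParE B B')
    (ihA : CommutesAt A A') (ihB : CommutesAt B B') : CommutesAt (A.pair B) (A'.pair B') := by
  intro _ hR
  cases hR with
  | @pairL _ A₁ _ hR =>
    obtain ⟨P, hA'P, hA₁P⟩ := ihA A₁ hR
    exact ⟨P.pair B', star_pair hA'P .refl, .pair hA₁P hB⟩
  | @pairR _ _ B₁ hR =>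
    obtain ⟨P, hB'P, hB₁P⟩ := ihB B₁ hR
    exact ⟨A'.pair P, star_pair .refl hB'P, .pair hA hB₁P⟩

theorem p1 {A A' : Tm} (hA : ParE A A') (ihA : CommutesAt A A') : CommutesAt A.p1 A'.p1 := by
  intro _ hR
  cases hR with
  | pi1 => exact hA.pair_proj_commute.1
  | pi1lam => exact hA.lam_proj_commute.1
  | @p1 _ A₁ hR =>
    obtain ⟨P, hA'P, hA₁P⟩ := ihA A₁ hR
    exact ⟨P.p1, star_p1 hA'P, .p1 hA₁P⟩

theorem p2 {A A' : Tm} (hA : ParE A A') (ihA : CommutesAt A A') : CommutesAt A.p2 A'.p2 := by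
  intro _ hR
  cases hR with
  | pi2 => exact hA.pair_proj_commute.2.1
  | pi2lam => exact hA.lam_proj_commute.2
  | @p2 _ A₁ hR =>
    obtain ⟨P, hA'P, hA₁P⟩ := ihA A₁ hR
    exact ⟨P.p2, star_p2 hA'P, .p2 hA₁P⟩

theorem eta {M N : Tm} (h : CommutesAt M N) :
    CommutesAt M (.lam (.app (N.lift 0) (.var 0))) := fun M' hR =>
  have ⟨P, hNP, hM'P⟩ := h M' hR
  ⟨.lam (.app (P.lift 0) (.var 0)), star_lam (star_appL (star_lift hNP 0) _), .eta hM'P⟩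

theorem sp {M N : Tm} (h : CommutesAt M N) : CommutesAt M (.pair (.p1 N) (.p2 N)) :=
  fun M' hR =>
  have ⟨P, hNP, hM'P⟩ := h M' hR
  ⟨.pair (.p1 P) (.p2 P), star_pair (star_p1 hNP) (star_p2 hNP), .sp hM'P⟩

end CommutesAt

theorem ParE.commutesAt {M N : Tm} (h : ParE M N) : CommutesAt M N := by
  induction h with
  | refl => exact .refl _
  | lam _ ih => exact ih.lam
  | app hA hB ihA ihB => exact .app hA hB ihA ihB
  | pair hA hB ihA ihB => exact .pair hA hB ihA ihB
  | p1 hA ih => exact .p1 hA ih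
  | p2 hA ih => exact .p2 hA ih
  | eta _ ih => exact ih.eta
  | sp _ ih => exact ih.sp

/-- R-reduction commutes locally with parallel η/SP-expansion. -/
theorem parE_stepR_commute (M M' N : Tm) (hE : ParE M N) (hR : StepR M M') :
    ∃ P, Relation.ReflTransGen StepR N P ∧ ParE M' P :=
  hE.commutesAt M' hR
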